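/- Let S be a complete separable metric space, let Γ ⊂ C_b(S) be admissible, and let f ∈ F₁(a,b) be admissible with a ≥ 0 and f* continuously differentiable on ℝ. Fix Borel probability measures Q, P on S and suppose g* ∈ Γ and ν* ∈ ℝ satisfy: (1) f((f*)'(g* − ν*)) ∈ L¹(P); (2) E_P[(f*)'(g* − ν*)] = 1; and (3) W^Γ(Q, η*) = E_Q[g*] − E_{η*}[g*], where dη* := (f*)'(g* − ν*) dP. Then η* is a Borel probability measure that attains the infimum inf over probability measures η of {D_f(η‖P) + W^Γ(Q,η)}, and D_f^Γ(Q‖P) = E_Q[g*] − (ν* + E_P[f*(g* − ν*)]). If f is strictly convex on (a,b) then η* is the unique minimizer. -/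

import Mathlib

open MeasureTheory Filter Set Topology ENNReal
open scoped Classical

noncomputable section

/-- The set of bounded measurable real-valued functions on `Ω`. -/
def Mb (Ω : Type*) [MeasurableSpace Ω] : Set (Ω → ℝ) :=
  {g | Measurable g ∧ ∃ C : ℝ, ∀ x, |g x| ≤ C}

/-- The set of bounded continuous real-valued functions on `S`. -/
def Cb (S : Type*) [TopologicalSpace S] : Set (S → ℝ) :=
  {g | Continuous g ∧ ∃ C : ℝ, ∀ x, |g x| ≤ C}

/-- The positive part of an extended real number, as an element of `ℝ≥0∞`. -/
def posE (x : EReal) : ℝ≥0∞ := if x = ⊤ then ⊤ else ENNReal.ofReal x.toReal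

/-- The extended-real-valued integral of an `EReal`-valued function, defined as the
difference of the lower integrals of the positive and negative parts, with the
convention `∞ - ∞ = -∞`. -/
def eIntegral {Ω : Type*} [MeasurableSpace Ω] (P : Measure Ω) (h : Ω → EReal) : EReal :=
  ((∫⁻ x, posE (h x) ∂P : ℝ≥0∞) : EReal) - ((∫⁻ x, posE (-(h x)) ∂P : ℝ≥0∞) : EReal)

/-- The Legendre transform `f*(y) = sup_x {x*y - f(x)}` of `f : ℝ → (-∞,∞]`. -/
def fstar (f : ℝ → EReal) (y : ℝ) : EReal := ⨆ x : ℝ, (((x * y : ℝ) : EReal) - f x)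

/-- `f : ℝ → (-∞,∞]` is (the convex LSC extension of) an element of `F₁(a,b)`:
convex, lower semicontinuous, never `-∞`, finite exactly on the interval `(a,b)`
(with `+∞` strictly outside `[a,b]`), and `f(1) = 0` with `a < 1 < b`. -/
structure IsF1 (a b : EReal) (f : ℝ → EReal) : Prop where
  a_lt_one : a < ((1 : ℝ) : EReal)
  one_lt_b : ((1 : ℝ) : EReal) < b
  convex : ∀ x y t : ℝ, 0 < t → t < 1 →
    f (t * x + (1 - t) * y) ≤ ((t : ℝ) : EReal) * f x + (((1 - t : ℝ)) : EReal) * f y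
  lsc : LowerSemicontinuous f
  ne_bot : ∀ x, f x ≠ ⊥
  finite_on : ∀ x : ℝ, a < (x : EReal) → (x : EReal) < b → f x ≠ ⊤
  top_outside : ∀ x : ℝ, ((x : EReal) < a ∨ b < (x : EReal)) → f x = ⊤
  at_one : f 1 = 0

/-- `Λ_f^P[g] = inf_{ν ∈ ℝ} {ν + E_P[f*(g - ν)]}`. -/
def LambdaF {Ω : Type*} [MeasurableSpace Ω] (f : ℝ → EReal) (P : Measure Ω) (g : Ω → ℝ) :
    EReal :=
  ⨅ ν : ℝ, ((ν : EReal) + eIntegral P (fun x => fstar f (g x - ν)))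

/-- The classical `f`-divergence `D_f(Q‖P) = E_P[f(dQ/dP)]` if `Q ≪ P`, else `∞`. -/
def fDivE {Ω : Type*} [MeasurableSpace Ω] (f : ℝ → EReal) (Q P : Measure Ω) : EReal :=
  if Q ≪ P then eIntegral P (fun x => f ((Q.rnDeriv P x).toReal)) else ⊤

/-- The `(f,Γ)`-divergence `D_f^Γ(Q‖P) = sup_{g ∈ Γ} {E_Q[g] - Λ_f^P[g]}`. -/
def fGammaDiv {Ω : Type*} [MeasurableSpace Ω] (f : ℝ → EReal) (Γ : Set (Ω → ℝ))
    (Q P : Measure Ω) : EReal :=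
  ⨆ g ∈ Γ, (((∫ x, g x ∂Q : ℝ) : EReal) - LambdaF f P g)

/-- The `Γ`-IPM `W^Γ(Q,P) = sup_{g ∈ Γ} {E_Q[g] - E_P[g]}`. -/
def ipmW {Ω : Type*} [MeasurableSpace Ω] (Γ : Set (Ω → ℝ)) (Q P : Measure Ω) : EReal :=
  ⨆ g ∈ Γ, (((∫ x, g x ∂Q : ℝ) : EReal) - ((∫ x, g x ∂P : ℝ) : EReal))


/-- Integration of a function against a finite signed measure, via the Jordan
decomposition. -/
def signedIntegral {S : Type*} [MeasurableSpace S] (μ : MeasureTheory.SignedMeasure S)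
    (g : S → ℝ) : ℝ :=
  (∫ x, g x ∂μ.toJordanDecomposition.posPart) - ∫ x, g x ∂μ.toJordanDecomposition.negPart

/-- The weak topology on real-valued functions on `S` generated by the maps
`g ↦ ∫ g dμ` for all finite signed (Borel) measures `μ` on `S`. -/
def weakTop (S : Type*) [MeasurableSpace S] : TopologicalSpace (S → ℝ) :=
  ⨅ μ : MeasureTheory.SignedMeasure S,
    TopologicalSpace.induced (fun g => signedIntegral μ g) inferInstance

/-- A set `Ψ` of functions is `P(S)`-determining: if two probability measures give the
same integral to every `ψ ∈ Ψ`, then they are equal. -/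
def Determining {S : Type*} [MeasurableSpace S] (Ψ : Set (S → ℝ)) : Prop :=
  ∀ Q P : Measure S, IsProbabilityMeasure Q → IsProbabilityMeasure P →
    (∀ ψ ∈ Ψ, (∫ x, ψ x ∂Q) = ∫ x, ψ x ∂P) → Q = P

/-- `Γ ⊆ C_b(S)` is admissible: it contains `0`, is convex, and is closed in `C_b(S)` for
the weak topology generated by the finite signed measures. -/
def AdmissibleGamma {S : Type*} [TopologicalSpace S] [MeasurableSpace S]
    (Γ : Set (S → ℝ)) : Prop :=
  (fun _ => (0 : ℝ)) ∈ Γ ∧ Convex ℝ Γ ∧ Γ ⊆ Cb S ∧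
    ∀ g ∈ Cb S, g ∈ @closure _ (weakTop S) Γ → g ∈ Γ

/-- `Γ` is strictly admissible: there is a `P(S)`-determining set `Ψ ⊆ C_b(S)` such that
for all `ψ ∈ Ψ` there are `c ∈ ℝ` and `ε > 0` with `c ± εψ ∈ Γ`. -/
def StrictlyAdmissibleGamma {S : Type*} [TopologicalSpace S] [MeasurableSpace S]
    (Γ : Set (S → ℝ)) : Prop :=
  ∃ Ψ : Set (S → ℝ), Ψ ⊆ Cb S ∧ Determining Ψ ∧
    ∀ ψ ∈ Ψ, ∃ c ε : ℝ, 0 < ε ∧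
      (fun x => c + ε * ψ x) ∈ Γ ∧ (fun x => c - ε * ψ x) ∈ Γ

/-- `f` is admissible: `f*` is finite everywhere and `lim_{y → -∞} f*(y) < ∞`. -/
def AdmissibleF (f : ℝ → EReal) : Prop :=
  (∀ y : ℝ, fstar f y ≠ ⊤) ∧ ∃ M : ℝ, ∀ᶠ y in Filter.atBot, fstar f y ≤ (M : EReal)

/-- `f` is strictly convex at `1`: `f` is not affine on any neighborhood of `1`. -/
def StrictlyConvexAtOne (f : ℝ → EReal) : Prop :=
  ∀ ε : ℝ, 0 < ε → ¬ ∃ m q : ℝ, ∀ x : ℝ, |x - 1| < ε → f x = ((m * x + q : ℝ) : EReal)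

/-- `f` is strictly convex on the interval `(a,b)` (with `a, b ∈ [-∞,∞]`). -/
def StrictConvexOnAB (a b : EReal) (f : ℝ → EReal) : Prop :=
  ∀ x y t : ℝ, a < (x : EReal) → (x : EReal) < b → a < (y : EReal) → (y : EReal) < b →
    x ≠ y → 0 < t → t < 1 →
    f (t * x + (1 - t) * y) < ((t : ℝ) : EReal) * f x + (((1 - t : ℝ)) : EReal) * f y


/-- The candidate optimizer `dη* = (f*)'(g - ν) dP` of the infimal convolution problem. -/
def etaStar {S : Type*} [MeasurableSpace S] (f : ℝ → EReal) (P : Measure S)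
    (g : S → ℝ) (ν : ℝ) : Measure S :=
  P.withDensity fun x => ENNReal.ofReal (deriv (fun y => (fstar f y).toReal) (g x - ν))

end

/-!
Fenchel–Young, `f r ≥ r y - f*(y)` with equality at `r = (f*)'(y)`, applied pointwise with
`r = dη/dP` and `y = g - ν`, gives weak duality:
`E_Q[g] - (ν + E_P[f*(g - ν)]) ≤ D_f(η‖P) + W^Γ(Q,η)` for all `g ∈ Γ`, `ν ∈ ℝ` and probability
measures `η`. Because `a ≥ 0`, `f*` is nondecreasing, so `(f*)'(g* - ν*) ≥ 0` and (2) makes `η*`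
a probability measure; the equality case of Fenchel–Young together with (3) makes the two sides
coincide at `(g*, ν*, η*)`, which proves both optimality statements at once. A second minimizer
must attain equality in Fenchel–Young `P`-a.e., and strict convexity of `f` makes the maximizer
`(f*)'(g* - ν*)` unique.
-/

lemma HasDerivAt.tendsto_of_approx_subgradient {φ : ℝ → ℝ} {x₀ y : ℝ}
    (hφ : HasDerivAt φ x₀ y) {s : ℝ → ℝ}
    (hs : ∀ t > 0, ∀ z, s t * (z - y) ≤ φ z - φ y + t ^ 2) :
    Tendsto s (𝓝[>] 0) (𝓝 x₀) := by
  have hid : Tendsto (fun t : ℝ => t) (𝓝[>] 0) (𝓝 0) := nhdsWithin_le_nhds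
  have hneg : Tendsto (fun t : ℝ => -t) (𝓝[>] 0) (𝓝[<] 0) := by
    simpa using tendsto_neg_nhdsGT_neg (a := (0 : ℝ))
  have hlow := (hφ.tendsto_slope_zero_left.comp hneg).sub hid
  have hupp := hφ.tendsto_slope_zero_right.add hid
  simp only [sub_zero, add_zero] at hlow hupp
  refine tendsto_of_tendsto_of_tendsto_of_le_of_le' hlow hupp ?_ ?_
  all_goals
    filter_upwards [self_mem_nhdsWithin] with t (ht : 0 < t)
    simp only [Function.comp_apply, smul_eq_mul]
  · have := hs t ht (y + -t)
    rw [show (-t)⁻¹ * (φ (y + -t) - φ y) = (φ y - φ (y + -t)) / t by field_simp; ring,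
      sub_le_iff_le_add, div_le_iff₀ ht]
    nlinarith
  · have := hs t ht (y + t)
    rw [← div_eq_inv_mul, ← sub_le_iff_le_add, le_div_iff₀ ht]
    nlinarith

section Legendre

variable {a b : EReal} {f : ℝ → EReal}

lemma sub_le_fstar (f : ℝ → EReal) (x y : ℝ) : ((x * y : ℝ) : EReal) - f x ≤ fstar f y :=
  le_iSup (fun x : ℝ => ((x * y : ℝ) : EReal) - f x) x

namespace IsF1

lemma coe_le_fstar (hf : IsF1 a b f) (y : ℝ) : (y : EReal) ≤ fstar f y := by
  simpa [hf.at_one] using sub_le_fstar f 1 y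

lemma fstar_ne_bot (hf : IsF1 a b f) (y : ℝ) : fstar f y ≠ ⊥ :=
  ne_bot_of_le_ne_bot (EReal.coe_ne_bot y) (hf.coe_le_fstar y)

lemma coe_toReal_fstar (hf : IsF1 a b f) (hfin : ∀ y, fstar f y ≠ ⊤) (y : ℝ) :
    (((fstar f y).toReal : ℝ) : EReal) = fstar f y :=
  EReal.coe_toReal (hfin y) (hf.fstar_ne_bot y)

lemma mul_sub_le_toReal_fstar (hf : IsF1 a b f) (hfin : ∀ y, fstar f y ≠ ⊤) {x y F : ℝ}
    (hF : f x = F) : x * y - F ≤ (fstar f y).toReal := by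
  have h := sub_le_fstar f x y
  rwa [hF, ← hf.coe_toReal_fstar hfin y, ← EReal.coe_sub, EReal.coe_le_coe_iff] at h

lemma fenchel_young (hf : IsF1 a b f) (hfin : ∀ y, fstar f y ≠ ⊤) (r y : ℝ) :
    ((r * y - (fstar f y).toReal : ℝ) : EReal) ≤ f r := by
  rcases eq_or_ne (f r) ⊤ with h | h
  · simp [h]
  · rw [← EReal.coe_toReal h (hf.ne_bot r), EReal.coe_le_coe_iff]
    linarith [hf.mul_sub_le_toReal_fstar hfin (y := y) (EReal.coe_toReal h (hf.ne_bot r)).symm]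

lemma exists_mul_sub_gt (hf : IsF1 a b f) (hfin : ∀ y, fstar f y ≠ ⊤) (y : ℝ) {ε : ℝ}
    (hε : 0 < ε) : ∃ x F : ℝ, f x = F ∧ (fstar f y).toReal - ε < x * y - F := by
  have hlt : (((fstar f y).toReal - ε : ℝ) : EReal) < fstar f y :=
    (EReal.coe_lt_coe_iff.mpr (by linarith)).trans_eq (hf.coe_toReal_fstar hfin y)
  obtain ⟨x, hx⟩ := lt_iSup_iff.mp hlt
  have hfx : f x ≠ ⊤ := by
    intro h
    simp [h] at hx
  refine ⟨x, (f x).toReal, (EReal.coe_toReal hfx (hf.ne_bot x)).symm, ?_⟩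
  rwa [← EReal.coe_toReal hfx (hf.ne_bot x), ← EReal.coe_sub, EReal.coe_lt_coe_iff] at hx

lemma fenchel_young_eq_of_hasDerivAt (hf : IsF1 a b f) (hfin : ∀ y, fstar f y ≠ ⊤) {x₀ y : ℝ}
    (hφ : HasDerivAt (fun z => (fstar f z).toReal) x₀ y) :
    f x₀ = ((x₀ * y - (fstar f y).toReal : ℝ) : EReal) := by
  refine le_antisymm ?_ (hf.fenchel_young hfin x₀ y)
  have hmax : ∀ t : ℝ, ∃ x F : ℝ, f x = F ∧
      (0 < t → (fstar f y).toReal - t ^ 2 < x * y - F) := fun t => by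
    by_cases ht : 0 < t
    · obtain ⟨x, F, hF, hx⟩ := hf.exists_mul_sub_gt hfin y (pow_pos ht 2)
      exact ⟨x, F, hF, fun _ => hx⟩
    · exact ⟨1, 0, by simp [hf.at_one], fun h => absurd h ht⟩
  choose s F hsF hsmax using hmax
  -- near-maximizers `s t` in the supremum defining `f*(y)` are approximate subgradients of
  -- `f*` at `y`, hence tend to `x₀`; lower semicontinuity of `f` then bounds `f x₀`
  have hs : Tendsto s (𝓝[>] 0) (𝓝 x₀) := by
    refine hφ.tendsto_of_approx_subgradient fun t ht z => ?_
    linarith [hf.mul_sub_le_toReal_fstar hfin (y := z) (hsF t), hsmax t ht]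
  by_contra hlt
  obtain ⟨c, hc₁, hc₂⟩ := EReal.lt_iff_exists_real_btwn.mp (not_le.mp hlt)
  rw [EReal.coe_lt_coe_iff] at hc₁
  have hlsc : ∀ᶠ t in 𝓝[>] 0, (c : EReal) < f (s t) := hs.eventually (hf.lsc x₀ c hc₂)
  have hval : ∀ᶠ t in 𝓝[>] (0 : ℝ), s t * y - (fstar f y).toReal + t ^ 2 < c := by
    refine Tendsto.eventually_lt_const hc₁ ?_
    have ht : Tendsto (fun t : ℝ => t ^ 2) (𝓝[>] 0) (𝓝 0) := by
      simpa using ((continuous_pow 2).tendsto (0 : ℝ)).mono_left nhdsWithin_le_nhds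
    simpa using ((hs.mul_const y).sub_const _).add ht
  obtain ⟨t, ht, hc, hv⟩ := (eventually_mem_nhdsWithin.and (hlsc.and hval)).exists
  rw [hsF, EReal.coe_lt_coe_iff] at hc
  linarith [hsmax t ht]

lemma mem_Icc_of_ne_top (hf : IsF1 a b f) {r : ℝ} (hr : f r ≠ ⊤) : a ≤ r ∧ (r : EReal) ≤ b := by
  by_contra h
  rw [not_and_or, not_le, not_le] at h
  exact hr (hf.top_outside r h)

lemma fenchel_young_eq_of_mem_Icc (hf : IsF1 a b f) (hfin : ∀ y, fstar f y ≠ ⊤) {y p q : ℝ}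
    (hp : f p = ((p * y - (fstar f y).toReal : ℝ) : EReal))
    (hq : f q = ((q * y - (fstar f y).toReal : ℝ) : EReal)) {z : ℝ} (hz : z ∈ Icc p q) :
    f z = ((z * y - (fstar f y).toReal : ℝ) : EReal) := by
  refine le_antisymm ?_ (hf.fenchel_young hfin z y)
  rcases hz.1.eq_or_lt with rfl | hpz
  · exact hp.le
  rcases hz.2.eq_or_lt with rfl | hzq
  · exact hq.le
  set t := (q - z) / (q - p)
  have hqp : 0 < q - p := by linarith
  have ht0 : 0 < t := div_pos (by linarith) hqp
  have ht1 : t < 1 := (div_lt_one hqp).mpr (by linarith)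
  have hz : z = t * p + (1 - t) * q := by
    simp only [t]
    field_simp
    ring
  have hconv := hf.convex p q t ht0 ht1
  rw [← hz, hp, hq] at hconv
  refine hconv.trans_eq ?_
  norm_cast
  rw [hz]
  ring

lemma eq_of_fenchel_young_eq (hf : IsF1 a b f) (hfin : ∀ y, fstar f y ≠ ⊤)
    (hsc : StrictConvexOnAB a b f) {y r r' : ℝ}
    (hr : f r = ((r * y - (fstar f y).toReal : ℝ) : EReal))
    (hr' : f r' = ((r' * y - (fstar f y).toReal : ℝ) : EReal)) : r = r' := by
  wlog hlt : r < r' generalizing r r'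
  · rcases (not_lt.mp hlt).eq_or_lt with h | h
    · exact h.symm
    · exact (this hr' hr h).symm
  -- `f` is affine on `[r, r']`; strict convexity is only assumed strictly inside `(a, b)`,
  -- so it is tested at the interior points `p < q`
  have hseg := fun z (hz : z ∈ Icc r r') => hf.fenchel_young_eq_of_mem_Icc hfin hr hr' hz
  obtain ⟨har, -⟩ := hf.mem_Icc_of_ne_top (hr ▸ EReal.coe_ne_top _)
  obtain ⟨-, hr'b⟩ := hf.mem_Icc_of_ne_top (hr' ▸ EReal.coe_ne_top _)
  set p := (3 * r + r') / 4 with hp_def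
  set q := (r + 3 * r') / 4 with hq_def
  have hp : r < p := by linarith
  have hpq : p < q := by linarith
  have hq : q < r' := by linarith
  have hpq' := EReal.coe_lt_coe_iff.mpr hpq
  have hap : a < p := har.trans_lt (EReal.coe_lt_coe_iff.mpr hp)
  have hqb : (q : EReal) < b := (EReal.coe_lt_coe_iff.mpr hq).trans_le hr'b
  have hstrict := hsc p q (1 / 2) hap (hpq'.trans hqb) (hap.trans hpq') hqb hpq.ne
    (by norm_num) (by norm_num)
  rw [hseg p ⟨hp.le, by linarith⟩, hseg q ⟨by linarith, hq.le⟩,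
    hseg _ ⟨by linarith, by linarith⟩] at hstrict
  norm_cast at hstrict
  linarith

lemma monotone_fstar (hf : IsF1 a b f) (ha : 0 ≤ a) : Monotone (fstar f) := by
  intro y y' hy
  refine iSup_mono fun x => ?_
  rcases lt_or_ge x 0 with hx | hx
  · have hxa : (x : EReal) < a := (EReal.coe_lt_coe_iff.mpr hx).trans_le ha
    simp [hf.top_outside x (Or.inl hxa)]
  · exact EReal.sub_le_sub (EReal.coe_le_coe_iff.mpr (mul_le_mul_of_nonneg_left hy hx)) le_rfl

lemma deriv_toReal_fstar_nonneg (hf : IsF1 a b f) (hfin : ∀ y, fstar f y ≠ ⊤) (ha : 0 ≤ a)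
    (y : ℝ) : 0 ≤ deriv (fun z => (fstar f z).toReal) y :=
  Monotone.deriv_nonneg fun _ _ h =>
    EReal.toReal_le_toReal (hf.monotone_fstar ha h) (hf.fstar_ne_bot _) (hfin _)

end IsF1

end Legendre

section EIntegral

lemma posE_coe (r : ℝ) : posE r = ENNReal.ofReal r := by
  simp [posE]

lemma posE_mono : Monotone posE := by
  intro x y h
  rcases eq_or_ne y ⊤ with rfl | hy
  · simp [posE]
  rcases eq_or_ne x ⊥ with rfl | hx
  · simp [posE]
  have hx' : x ≠ ⊤ := ne_top_of_le_ne_top hy h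
  simp only [posE, if_neg hx', if_neg hy]
  exact ENNReal.ofReal_le_ofReal (EReal.toReal_le_toReal h hx hy)

lemma measurable_posE : Measurable posE :=
  Measurable.ite (measurableSet_singleton ⊤) measurable_const
    measurable_ereal_toReal.ennreal_ofReal

lemma ofReal_abs_toReal_le_posE_add_posE_neg (x : EReal) :
    ENNReal.ofReal |x.toReal| ≤ posE x + posE (-x) := by
  induction x using EReal.rec with
  | bot => simp
  | top => simp
  | coe r =>
    rw [← EReal.coe_neg, posE_coe, posE_coe, EReal.toReal_coe]
    rcases abs_cases r with ⟨h, -⟩ | ⟨h, -⟩ <;> rw [h]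
    · exact le_self_add
    · exact le_add_self

variable {Ω : Type*} [MeasurableSpace Ω] {P : Measure Ω}

lemma eIntegral_coe {u : Ω → ℝ} (hu : Integrable u P) :
    eIntegral P (fun x => (u x : EReal)) = ((∫ x, u x ∂P : ℝ) : EReal) := by
  simp only [eIntegral, ← EReal.coe_neg, posE_coe]
  rw [integral_eq_lintegral_pos_part_sub_lintegral_neg_part hu, EReal.coe_sub,
    ← EReal.coe_ennreal_toReal hu.lintegral_lt_top.ne,
    ← EReal.coe_ennreal_toReal
      (show ∫⁻ x, ENNReal.ofReal (-u x) ∂P ≠ ⊤ from hu.neg.lintegral_lt_top.ne)]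

lemma eIntegral_mono_ae {h₁ h₂ : Ω → EReal} (h : ∀ᵐ x ∂P, h₁ x ≤ h₂ x) :
    eIntegral P h₁ ≤ eIntegral P h₂ :=
  EReal.sub_le_sub
    (EReal.coe_ennreal_le_coe_ennreal_iff.mpr (lintegral_mono_ae (h.mono fun _ hx => posE_mono hx)))
    (EReal.coe_ennreal_le_coe_ennreal_iff.mpr
      (lintegral_mono_ae (h.mono fun _ hx => posE_mono (EReal.neg_le_neg_iff.mpr hx))))

lemma eIntegral_congr_ae {h₁ h₂ : Ω → EReal} (h : ∀ᵐ x ∂P, h₁ x = h₂ x) :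
    eIntegral P h₁ = eIntegral P h₂ :=
  le_antisymm (eIntegral_mono_ae (h.mono fun _ hx => hx.le))
    (eIntegral_mono_ae (h.mono fun _ hx => hx.ge))

lemma ae_eq_of_le_of_eIntegral_eq {h : Ω → EReal} (hh : Measurable h) {u : Ω → ℝ}
    (hu : Integrable u P) (hle : ∀ x, (u x : EReal) ≤ h x)
    (heq : eIntegral P h = ((∫ x, u x ∂P : ℝ) : EReal)) : ∀ᵐ x ∂P, h x = u x := by
  have hneg : ∫⁻ x, posE (-h x) ∂P ≠ ⊤ := by
    refine ne_top_of_le_ne_top hu.neg.lintegral_lt_top.ne (lintegral_mono fun x => ?_)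
    simpa [← EReal.coe_neg, posE_coe] using posE_mono (EReal.neg_le_neg_iff.mpr (hle x))
  have hpos : ∫⁻ x, posE (h x) ∂P ≠ ⊤ := by
    intro htop
    rw [eIntegral, htop, ← EReal.coe_ennreal_toReal hneg, EReal.coe_ennreal_top,
      EReal.top_sub_coe] at heq
    exact EReal.top_ne_coe _ heq
  have hcoe : ∀ᵐ x ∂P, h x = (h x).toReal := by
    filter_upwards [ae_lt_top (measurable_posE.comp hh) hpos] with x hx
    refine (EReal.coe_toReal ?_ (ne_bot_of_le_ne_bot (EReal.coe_ne_bot _) (hle x))).symm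
    rintro hx'
    simp [hx', posE] at hx
  have hv : Integrable (fun x => (h x).toReal) P := by
    refine ⟨(measurable_ereal_toReal.comp hh).aestronglyMeasurable, ?_⟩
    calc ∫⁻ x, ‖(h x).toReal‖ₑ ∂P
        ≤ ∫⁻ x, (posE (h x) + posE (-h x)) ∂P := lintegral_mono fun x => by
          simpa [Real.enorm_eq_ofReal_abs] using ofReal_abs_toReal_le_posE_add_posE_neg (h x)
      _ < ⊤ := by
        rw [lintegral_add_left (f := fun x => posE (h x)) (measurable_posE.comp hh)]
        exact ENNReal.add_lt_top.mpr ⟨hpos.lt_top, hneg.lt_top⟩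
  have hint : ∫ x, ((h x).toReal - u x) ∂P = 0 := by
    rw [integral_sub hv hu, sub_eq_zero, ← EReal.coe_eq_coe_iff, ← eIntegral_coe hv,
      ← heq, eIntegral_congr_ae hcoe]
  have hnonneg : 0 ≤ᵐ[P] fun x => (h x).toReal - u x := by
    filter_upwards [hcoe] with x hx
    have := hle x
    rw [hx, EReal.coe_le_coe_iff] at this
    simpa using this
  filter_upwards [(integral_eq_zero_iff_of_nonneg_ae hnonneg (hv.sub hu)).mp hint, hcoe]
    with x hx hcx
  rw [hcx, EReal.coe_eq_coe_iff]
  simpa [sub_eq_zero] using hx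

end EIntegral

section Divergences

variable {S : Type*} [MeasurableSpace S] {a b : EReal} {f : ℝ → EReal}

lemma Cb_subset_Mb [TopologicalSpace S] [OpensMeasurableSpace S] : Cb S ⊆ Mb S :=
  fun _ ⟨hg, hb⟩ => ⟨hg.measurable, hb⟩

lemma integrable_comp_of_mem_Mb {μ : Measure S} [IsFiniteMeasure μ] {g : S → ℝ}
    (hg : g ∈ Mb S) {F : ℝ → ℝ} (hF : Continuous F) : Integrable (fun x => F (g x)) μ := by
  obtain ⟨hgm, C, hC⟩ := hg
  obtain ⟨K, hK⟩ := (isCompact_Icc (a := -C) (b := C)).exists_bound_of_continuousOn hF.continuousOn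
  exact .of_bound (hF.measurable.comp hgm).aestronglyMeasurable K
    (ae_of_all _ fun x => hK _ (abs_le.mp (hC x)))

lemma integrable_of_mem_Mb {μ : Measure S} [IsFiniteMeasure μ] {g : S → ℝ} (hg : g ∈ Mb S) :
    Integrable g μ :=
  integrable_comp_of_mem_Mb hg continuous_id

noncomputable def youngMinorant (f : ℝ → EReal) (η P : Measure S) (g : S → ℝ) (ν : ℝ) (x : S) : ℝ :=
  (η.rnDeriv P x).toReal * (g x - ν) - (fstar f (g x - ν)).toReal

variable {η P Q : Measure S} {g : S → ℝ} {Γ : Set (S → ℝ)}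

lemma coe_youngMinorant_le (hf : IsF1 a b f) (hfin : ∀ y, fstar f y ≠ ⊤) (ν : ℝ) (x : S) :
    (youngMinorant f η P g ν x : EReal) ≤ f ((η.rnDeriv P x).toReal) :=
  hf.fenchel_young hfin _ _

lemma integrable_toReal_fstar_comp [IsFiniteMeasure P]
    (hφ : Continuous fun y => (fstar f y).toReal) (hg : g ∈ Mb S) (ν : ℝ) :
    Integrable (fun x => (fstar f (g x - ν)).toReal) P :=
  integrable_comp_of_mem_Mb hg (hφ.comp (continuous_sub_right ν))

lemma integrable_toReal_rnDeriv_mul [IsFiniteMeasure η] [IsFiniteMeasure P] (hac : η ≪ P)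
    (hg : g ∈ Mb S) (ν : ℝ) : Integrable (fun x => (η.rnDeriv P x).toReal * (g x - ν)) P :=
  (integrable_rnDeriv_smul_iff hac).mpr (integrable_comp_of_mem_Mb hg (continuous_sub_right ν))

lemma integrable_youngMinorant [IsFiniteMeasure η] [IsFiniteMeasure P] (hac : η ≪ P)
    (hφ : Continuous fun y => (fstar f y).toReal) (hg : g ∈ Mb S) (ν : ℝ) :
    Integrable (youngMinorant f η P g ν) P :=
  (integrable_toReal_rnDeriv_mul hac hg ν).sub (integrable_toReal_fstar_comp hφ hg ν)

lemma integral_youngMinorant [IsProbabilityMeasure η] [IsFiniteMeasure P] (hac : η ≪ P)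
    (hφ : Continuous fun y => (fstar f y).toReal) (hg : g ∈ Mb S) (ν : ℝ) :
    ∫ x, youngMinorant f η P g ν x ∂P
      = ∫ x, g x ∂η - ν - ∫ x, (fstar f (g x - ν)).toReal ∂P := by
  have hρ := integral_rnDeriv_smul hac (f := fun x => g x - ν)
  simp only [smul_eq_mul] at hρ
  simp only [youngMinorant]
  rw [integral_sub (integrable_toReal_rnDeriv_mul hac hg ν) (integrable_toReal_fstar_comp hφ hg ν),
    hρ, integral_sub (integrable_of_mem_Mb hg) (integrable_const ν)]
  simp

lemma coe_sub_le_fDivE (hf : IsF1 a b f) (hfin : ∀ y, fstar f y ≠ ⊤)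
    (hφ : Continuous fun y => (fstar f y).toReal) [IsProbabilityMeasure η] [IsFiniteMeasure P]
    (hac : η ≪ P) (hg : g ∈ Mb S) (ν : ℝ) :
    ((∫ x, g x ∂η - ν - ∫ x, (fstar f (g x - ν)).toReal ∂P : ℝ) : EReal) ≤ fDivE f η P := by
  rw [fDivE, if_pos hac, ← integral_youngMinorant hac hφ hg,
    ← eIntegral_coe (integrable_youngMinorant hac hφ hg ν)]
  exact eIntegral_mono_ae (ae_of_all _ (coe_youngMinorant_le hf hfin ν))

lemma eIntegral_fstar_comp (hf : IsF1 a b f) (hfin : ∀ y, fstar f y ≠ ⊤)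
    (hφ : Continuous fun y => (fstar f y).toReal) [IsFiniteMeasure P] (hg : g ∈ Mb S) (ν : ℝ) :
    eIntegral P (fun x => fstar f (g x - ν))
      = ((∫ x, (fstar f (g x - ν)).toReal ∂P : ℝ) : EReal) := by
  rw [← eIntegral_coe (integrable_toReal_fstar_comp hφ hg ν)]
  exact eIntegral_congr_ae (ae_of_all _ fun x => (hf.coe_toReal_fstar hfin _).symm)

lemma coe_sub_le_LambdaF (hf : IsF1 a b f) (hfin : ∀ y, fstar f y ≠ ⊤)
    (hφ : Continuous fun y => (fstar f y).toReal) [IsProbabilityMeasure η] [IsFiniteMeasure P]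
    (hac : η ≪ P) (hg : g ∈ Mb S) {d : ℝ} (hd : fDivE f η P = d) :
    ((∫ x, g x ∂η - d : ℝ) : EReal) ≤ LambdaF f P g := by
  refine le_iInf fun ν => ?_
  have h := coe_sub_le_fDivE hf hfin hφ hac hg ν
  rw [hd, EReal.coe_le_coe_iff] at h
  rw [eIntegral_fstar_comp hf hfin hφ hg, ← EReal.coe_add, EReal.coe_le_coe_iff]
  linarith

lemma coe_sub_le_ipmW (hg : g ∈ Γ) :
    ((∫ x, g x ∂Q - ∫ x, g x ∂η : ℝ) : EReal) ≤ ipmW Γ Q η :=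
  (EReal.coe_sub _ _).trans_le
    (le_iSup₂ (f := fun g (_ : g ∈ Γ) => ((∫ x, g x ∂Q : ℝ) : EReal) - ((∫ x, g x ∂η : ℝ) : EReal))
      g hg)

lemma le_fGammaDiv (hg : g ∈ Γ) (ν : ℝ) :
    ((∫ x, g x ∂Q : ℝ) : EReal) - ((ν : EReal) + eIntegral P (fun x => fstar f (g x - ν)))
      ≤ fGammaDiv f Γ Q P :=
  le_iSup₂_of_le (f := fun g (_ : g ∈ Γ) => ((∫ x, g x ∂Q : ℝ) : EReal) - LambdaF f P g) g hg
    (EReal.sub_le_sub le_rfl (iInf_le _ ν))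

lemma fGammaDiv_le_fDivE_add_ipmW (hf : IsF1 a b f) (hfin : ∀ y, fstar f y ≠ ⊤)
    (hφ : Continuous fun y => (fstar f y).toReal) (hΓ : Γ ⊆ Mb S) [IsProbabilityMeasure P]
    (η : Measure S) [IsProbabilityMeasure η] :
    fGammaDiv f Γ Q P ≤ fDivE f η P + ipmW Γ Q η := by
  refine iSup₂_le fun g hg => ?_
  have hW := coe_sub_le_ipmW (Q := Q) (η := η) hg
  rcases eq_or_ne (fDivE f η P) ⊤ with hD | hD
  · rw [hD, EReal.top_add_of_ne_bot (ne_bot_of_le_ne_bot (EReal.coe_ne_bot _) hW)]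
    exact le_top
  have hac : η ≪ P := by
    by_contra hac
    exact hD (if_neg hac)
  set d := (fDivE f η P).toReal
  have hd : fDivE f η P = d := (EReal.coe_toReal hD
    (ne_bot_of_le_ne_bot (EReal.coe_ne_bot _) (coe_sub_le_fDivE hf hfin hφ hac (hΓ hg) 0))).symm
  calc ((∫ x, g x ∂Q : ℝ) : EReal) - LambdaF f P g
      ≤ ((∫ x, g x ∂Q : ℝ) : EReal) - ((∫ x, g x ∂η - d : ℝ) : EReal) :=
        EReal.sub_le_sub le_rfl (coe_sub_le_LambdaF hf hfin hφ hac (hΓ hg) hd)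
    _ = (d : EReal) + ((∫ x, g x ∂Q - ∫ x, g x ∂η : ℝ) : EReal) := by
        norm_cast
        ring
    _ ≤ fDivE f η P + ipmW Γ Q η := hd ▸ add_le_add_right hW _

end Divergences

lemma EReal.eq_coe_of_add_le_coe_add {x y : EReal} {A B : ℝ} (hx : (A : EReal) ≤ x)
    (hy : (B : EReal) ≤ y) (h : x + y ≤ ((A + B : ℝ) : EReal)) : x = A := by
  induction x using EReal.rec with
  | bot => exact absurd hx (by simp)
  | top =>
    rw [EReal.top_add_of_ne_bot (ne_bot_of_le_ne_bot (EReal.coe_ne_bot B) hy), top_le_iff] at h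
    exact absurd h (EReal.coe_ne_top _)
  | coe x =>
    induction y using EReal.rec with
    | bot => exact absurd hy (by simp)
    | top =>
      rw [EReal.coe_add_top, top_le_iff] at h
      exact absurd h (EReal.coe_ne_top _)
    | coe y =>
      norm_cast at hx hy h ⊢
      linarith

section EtaStar

variable {S : Type*} [MeasurableSpace S] {a b : EReal} {f : ℝ → EReal}
  {P : Measure S} {g : S → ℝ} {ν : ℝ}

lemma toReal_rnDeriv_etaStar (hf : IsF1 a b f) (hfin : ∀ y, fstar f y ≠ ⊤) (ha : 0 ≤ a)
    [SigmaFinite P] (hg : Measurable g) :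
    (fun x => ((etaStar f P g ν).rnDeriv P x).toReal)
      =ᵐ[P] fun x => deriv (fun y => (fstar f y).toReal) (g x - ν) := by
  have hd : Measurable fun x => ENNReal.ofReal (deriv (fun y => (fstar f y).toReal) (g x - ν)) :=
    ((measurable_deriv _).comp (hg.sub_const ν)).ennreal_ofReal
  filter_upwards [Measure.rnDeriv_withDensity P hd] with x hx
  rw [etaStar, hx, ENNReal.toReal_ofReal (hf.deriv_toReal_fstar_nonneg hfin ha _)]

lemma isProbabilityMeasure_etaStar (hf : IsF1 a b f) (hfin : ∀ y, fstar f y ≠ ⊤) (ha : 0 ≤ a)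
    (hC1 : ContDiff ℝ 1 (fun y => (fstar f y).toReal)) [IsProbabilityMeasure P]
    (hg : g ∈ Mb S) (h2 : ∫ x, deriv (fun y => (fstar f y).toReal) (g x - ν) ∂P = 1) :
    IsProbabilityMeasure (etaStar f P g ν) := by
  have hd : Integrable (fun x => deriv (fun y => (fstar f y).toReal) (g x - ν)) P :=
    integrable_comp_of_mem_Mb hg ((hC1.continuous_deriv le_rfl).comp (continuous_sub_right ν))
  constructor
  rw [etaStar, withDensity_apply _ .univ, Measure.restrict_univ,
    ← ofReal_integral_eq_lintegral_ofReal hd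
      (ae_of_all _ fun _ => hf.deriv_toReal_fstar_nonneg hfin ha _),
    h2, ENNReal.ofReal_one]

lemma fDivE_etaStar (hf : IsF1 a b f) (hfin : ∀ y, fstar f y ≠ ⊤) (ha : 0 ≤ a)
    (hC1 : ContDiff ℝ 1 (fun y => (fstar f y).toReal)) [IsProbabilityMeasure P]
    (hg : g ∈ Mb S) [IsProbabilityMeasure (etaStar f P g ν)] :
    fDivE f (etaStar f P g ν) P = ((∫ x, g x ∂(etaStar f P g ν) - ν
      - ∫ x, (fstar f (g x - ν)).toReal ∂P : ℝ) : EReal) := by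
  have hac : etaStar f P g ν ≪ P := withDensity_absolutelyContinuous _ _
  rw [fDivE, if_pos hac, ← integral_youngMinorant hac hC1.continuous hg,
    ← eIntegral_coe (integrable_youngMinorant hac hC1.continuous hg ν)]
  refine eIntegral_congr_ae ?_
  filter_upwards [toReal_rnDeriv_etaStar hf hfin ha hg.1] with x hx
  rw [youngMinorant, hx]
  exact hf.fenchel_young_eq_of_hasDerivAt hfin
    ((hC1.differentiable one_ne_zero).differentiableAt.hasDerivAt)

lemma eq_etaStar_of_fDivE_eq (hf : IsF1 a b f) (hfin : ∀ y, fstar f y ≠ ⊤)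
    (hC1 : ContDiff ℝ 1 (fun y => (fstar f y).toReal)) (hsc : StrictConvexOnAB a b f)
    {η : Measure S} [IsProbabilityMeasure η] [IsFiniteMeasure P] (hac : η ≪ P) (hg : g ∈ Mb S)
    (hD : fDivE f η P = ((∫ x, g x ∂η - ν - ∫ x, (fstar f (g x - ν)).toReal ∂P : ℝ) : EReal)) :
    η = etaStar f P g ν := by
  have hmeas : Measurable fun x => f ((η.rnDeriv P x).toReal) :=
    hf.lsc.measurable.comp (Measure.measurable_rnDeriv η P).ennreal_toReal
  have hae := ae_eq_of_le_of_eIntegral_eq hmeas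
    (integrable_youngMinorant hac hC1.continuous hg ν) (coe_youngMinorant_le hf hfin ν)
    (by rw [integral_youngMinorant hac hC1.continuous hg, ← hD, fDivE, if_pos hac])
  have hρ : η.rnDeriv P =ᵐ[P] fun x =>
      ENNReal.ofReal (deriv (fun y => (fstar f y).toReal) (g x - ν)) := by
    filter_upwards [hae, Measure.rnDeriv_lt_top η P] with x hx hlt
    rw [← ENNReal.ofReal_toReal hlt.ne]
    exact congrArg ENNReal.ofReal (hf.eq_of_fenchel_young_eq hfin hsc hx
      (hf.fenchel_young_eq_of_hasDerivAt hfin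
        (hC1.differentiable one_ne_zero).differentiableAt.hasDerivAt))
  exact (Measure.withDensity_rnDeriv_eq η P hac).symm.trans (withDensity_congr_ae hρ)

lemma eq_etaStar_of_fDivE_add_ipmW_le (hf : IsF1 a b f) (hfin : ∀ y, fstar f y ≠ ⊤)
    (hC1 : ContDiff ℝ 1 (fun y => (fstar f y).toReal)) (hsc : StrictConvexOnAB a b f)
    {Γ : Set (S → ℝ)} (hΓ : Γ ⊆ Mb S) (hg : g ∈ Γ) {Q η : Measure S} [IsProbabilityMeasure η]
    [IsProbabilityMeasure P]
    (hmin : fDivE f η P + ipmW Γ Q η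
      ≤ ((∫ x, g x ∂Q - ν - ∫ x, (fstar f (g x - ν)).toReal ∂P : ℝ) : EReal)) :
    η = etaStar f P g ν := by
  have hW := coe_sub_le_ipmW (Q := Q) (η := η) hg
  have hac : η ≪ P := by
    by_contra hac
    rw [fDivE, if_neg hac, EReal.top_add_of_ne_bot (ne_bot_of_le_ne_bot (EReal.coe_ne_bot _) hW),
      top_le_iff] at hmin
    exact EReal.coe_ne_top _ hmin
  refine eq_etaStar_of_fDivE_eq hf hfin hC1 hsc hac (hΓ hg)
    (EReal.eq_coe_of_add_le_coe_add (coe_sub_le_fDivE hf hfin hC1.continuous hac (hΓ hg) ν) hW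
      (hmin.trans_eq ?_))
  congr 1
  ring

end EtaStar

theorem stmt17_general {S : Type*} [MetricSpace S] [MeasurableSpace S] [BorelSpace S]
    (a b : EReal) (f : ℝ → EReal) (hf : IsF1 a b f) (hfa : AdmissibleF f)
    (ha : (0 : EReal) ≤ a)
    (hC1 : ContDiff ℝ 1 (fun y => (fstar f y).toReal))
    (Γ : Set (S → ℝ)) (hΓ : AdmissibleGamma Γ)
    (Q P : Measure S) [IsProbabilityMeasure P]
    (gs : S → ℝ) (hgs : gs ∈ Γ) (νs : ℝ)
    -- (2) `E_P[(f*)'(g* - ν*)] = 1`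
    (h2 : (∫ x, deriv (fun y => (fstar f y).toReal) (gs x - νs) ∂P) = 1)
    -- (3) `W^Γ(Q,η*) = E_Q[g*] - E_{η*}[g*]`
    (h3 : ipmW Γ Q (etaStar f P gs νs)
      = ((∫ x, gs x ∂Q : ℝ) : EReal) - ((∫ x, gs x ∂(etaStar f P gs νs) : ℝ) : EReal)) :
    IsProbabilityMeasure (etaStar f P gs νs)
    ∧ (⨅ η ∈ {η : Measure S | IsProbabilityMeasure η}, (fDivE f η P + ipmW Γ Q η))
        = fDivE f (etaStar f P gs νs) P + ipmW Γ Q (etaStar f P gs νs)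
    ∧ fGammaDiv f Γ Q P
        = ((∫ x, gs x ∂Q : ℝ) : EReal)
          - ((νs : EReal) + eIntegral P (fun x => fstar f (gs x - νs)))
    ∧ (StrictConvexOnAB a b f → ∀ η' : Measure S, IsProbabilityMeasure η' →
        fDivE f η' P + ipmW Γ Q η'
          = (⨅ η ∈ {η : Measure S | IsProbabilityMeasure η}, (fDivE f η P + ipmW Γ Q η)) →
        η' = etaStar f P gs νs) := by
  obtain ⟨hfin, -⟩ := hfa
  have hΓM : Γ ⊆ Mb S := hΓ.2.2.1.trans Cb_subset_Mb
  have hφ : Continuous fun y => (fstar f y).toReal := hC1.continuous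
  have hprob := isProbabilityMeasure_etaStar hf hfin ha hC1 (hΓM hgs) h2
  set V : ℝ := ∫ x, gs x ∂Q - νs - ∫ x, (fstar f (gs x - νs)).toReal ∂P
  have hV : ((∫ x, gs x ∂Q : ℝ) : EReal)
      - ((νs : EReal) + eIntegral P (fun x => fstar f (gs x - νs))) = V := by
    rw [eIntegral_fstar_comp hf hfin hφ (hΓM hgs)]
    norm_cast
    ring
  have hval : fDivE f (etaStar f P gs νs) P + ipmW Γ Q (etaStar f P gs νs) = V := by
    rw [fDivE_etaStar hf hfin ha hC1 (hΓM hgs), h3]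
    norm_cast
    ring
  have hdual : ∀ η : Measure S, IsProbabilityMeasure η →
      fGammaDiv f Γ Q P ≤ fDivE f η P + ipmW Γ Q η := fun η _ =>
    fGammaDiv_le_fDivE_add_ipmW hf hfin hφ hΓM η
  have hlow : (V : EReal) ≤ fGammaDiv f Γ Q P := hV ▸ le_fGammaDiv hgs νs
  have hinf : (⨅ η ∈ {η : Measure S | IsProbabilityMeasure η}, (fDivE f η P + ipmW Γ Q η))
      = V :=
    le_antisymm (hval ▸ iInf₂_le _ hprob) (le_iInf₂ fun η hη => hlow.trans (hdual η hη))
  refine ⟨hprob, hinf.trans hval.symm, (le_antisymm (hval ▸ hdual _ hprob) hlow).trans hV.symm,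
    fun hsc η' hη' hmin => ?_⟩
  exact eq_etaStar_of_fDivE_add_ipmW_le hf hfin hC1 hsc hΓM hgs (hmin.trans hinf).le

/-- Characterization of the solution of the infimal convolution problem:
if `g* ∈ Γ` and `ν* ∈ ℝ` satisfy (1) `f((f*)'(g* - ν*)) ∈ L¹(P)`,
(2) `E_P[(f*)'(g* - ν*)] = 1`, and (3) `W^Γ(Q,η*) = E_Q[g*] - E_{η*}[g*]` where
`dη* = (f*)'(g* - ν*) dP`, then `η*` is a probability measure attaining
`inf_η {D_f(η‖P) + W^Γ(Q,η)}` and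
`D_f^Γ(Q‖P) = E_Q[g*] - (ν* + E_P[f*(g* - ν*)])`; if `f` is strictly convex on `(a,b)`
then `η*` is the unique minimizer. -/
theorem stmt17 {S : Type*} [MetricSpace S] [CompleteSpace S]
    [TopologicalSpace.SeparableSpace S] [MeasurableSpace S] [BorelSpace S]
    (a b : EReal) (f : ℝ → EReal) (hf : IsF1 a b f) (hfa : AdmissibleF f)
    (ha : (0 : EReal) ≤ a)
    (hC1 : ContDiff ℝ 1 (fun y => (fstar f y).toReal))
    (Γ : Set (S → ℝ)) (hΓ : AdmissibleGamma Γ)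
    (Q P : Measure S) [IsProbabilityMeasure Q] [IsProbabilityMeasure P]
    (gs : S → ℝ) (hgs : gs ∈ Γ) (νs : ℝ)
    -- (1) `f((f*)'(g* - ν*)) ∈ L¹(P)`
    (h1 : (∀ᵐ x ∂P, f (deriv (fun y => (fstar f y).toReal) (gs x - νs)) ≠ ⊤)
      ∧ Integrable
          (fun x => (f (deriv (fun y => (fstar f y).toReal) (gs x - νs))).toReal) P)
    -- (2) `E_P[(f*)'(g* - ν*)] = 1`
    (h2 : (∫ x, deriv (fun y => (fstar f y).toReal) (gs x - νs) ∂P) = 1)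
    -- (3) `W^Γ(Q,η*) = E_Q[g*] - E_{η*}[g*]`
    (h3 : ipmW Γ Q (etaStar f P gs νs)
      = ((∫ x, gs x ∂Q : ℝ) : EReal) - ((∫ x, gs x ∂(etaStar f P gs νs) : ℝ) : EReal)) :
    IsProbabilityMeasure (etaStar f P gs νs)
    ∧ (⨅ η ∈ {η : Measure S | IsProbabilityMeasure η}, (fDivE f η P + ipmW Γ Q η))
        = fDivE f (etaStar f P gs νs) P + ipmW Γ Q (etaStar f P gs νs)
    ∧ fGammaDiv f Γ Q P
        = ((∫ x, gs x ∂Q : ℝ) : EReal)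
          - ((νs : EReal) + eIntegral P (fun x => fstar f (gs x - νs)))
    ∧ (StrictConvexOnAB a b f → ∀ η' : Measure S, IsProbabilityMeasure η' →
        fDivE f η' P + ipmW Γ Q η'
          = (⨅ η ∈ {η : Measure S | IsProbabilityMeasure η}, (fDivE f η P + ipmW Γ Q η)) →
        η' = etaStar f P gs νs) :=
  stmt17_general a b f hf hfa ha hC1 Γ hΓ Q P gs hgs νs h2 h3
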